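/- For every x > 0, the limiting mean-field monomer-dimer pressure p(x) = f(x)(1−log f(x)−log 2) + g(x)(1−log g(x)+log x) − 1 satisfies p(x) = −(1−g(x))/2 − (1/2)·log(1−g(x)), where f(x) = (2+x²−√(x⁴+4x²))/4 and g(x) = 1−2f(x). -/
import Mathlib


noncomputable def fMD (x : ℝ) : ℝ := (2 + x ^ 2 - Real.sqrt (x ^ 4 + 4 * x ^ 2)) / 4

noncomputable def gMD (x : ℝ) : ℝ := 1 - 2 * fMD x

noncomputable def pMD (x : ℝ) : ℝ :=
  fMD x * (1 - Real.log (fMD x) - Real.log 2)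
    + gMD x * (1 - Real.log (gMD x) + Real.log x) - 1

/-- for every `x > 0`,
`p(x) = −(1−g(x))/2 − (1/2)·log(1−g(x))`. -/
theorem stmt8 (x : ℝ) (hx : 0 < x) :
    pMD x = -(1 - gMD x) / 2 - (1 / 2) * Real.log (1 - gMD x) := by
  have hnn : (0:ℝ) ≤ x ^ 4 + 4 * x ^ 2 := by positivity
  have hs2 : Real.sqrt (x ^ 4 + 4 * x ^ 2) ^ 2 = x ^ 4 + 4 * x ^ 2 :=
    Real.sq_sqrt hnn
  have hslt : Real.sqrt (x ^ 4 + 4 * x ^ 2) < 2 + x ^ 2 := by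
    have h1 : x ^ 4 + 4 * x ^ 2 < (2 + x ^ 2) ^ 2 := by nlinarith
    nlinarith [Real.sqrt_nonneg (x ^ 4 + 4 * x ^ 2), hs2]
  have hsgt : x ^ 2 < Real.sqrt (x ^ 4 + 4 * x ^ 2) := by
    nlinarith [Real.sqrt_nonneg (x ^ 4 + 4 * x ^ 2), hs2, sq_nonneg x, hx]
  have hf : 0 < fMD x := by unfold fMD; linarith
  have hg : 0 < gMD x := by unfold gMD fMD; linarith
  have hkey : gMD x ^ 2 = x ^ 2 * (2 * fMD x) := by
    unfold gMD fMD; nlinarith [hs2]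
  have hLg : Real.log (gMD x) =
      Real.log x + (Real.log 2 + Real.log (fMD x)) / 2 := by
    have h1 : Real.log (gMD x ^ 2) = 2 * Real.log (gMD x) := by
      rw [Real.log_pow]; ring
    have h2 : Real.log (x ^ 2 * (2 * fMD x)) =
        2 * Real.log x + (Real.log 2 + Real.log (fMD x)) := by
      rw [Real.log_mul (by positivity) (by positivity),
        Real.log_mul (by norm_num) hf.ne', Real.log_pow]
      ring
    have := hkey ▸ h1
    linarith [this.symm.trans h2]
  have h1g : 1 - gMD x = 2 * fMD x := by unfold gMD; ring
  have hL2f : Real.log (2 * fMD x) = Real.log 2 + Real.log (fMD x) :=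
    Real.log_mul (by norm_num) hf.ne'
  unfold pMD
  rw [h1g, hL2f, hLg, gMD]
  ring
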